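/- arXiv:2012.03346 — 7 statements merged into one kernel-verified Lean document; each statement's English description precedes it below -/
import Mathlib

section
/- Let A be a commutative K-algebra over a field K of characteristic zero, and let δ₁, δ₂ be locally nilpotent derivations of A with ker δ₁ = ker δ₂. Then there exist nonzero elements f, g ∈ ker δ₁ such that f·δ₁ = g·δ₂, and consequently δ₁ and δ₂ commute. -/
/-- A derivation is locally nilpotent if every element is killed by some power. -/
def Derivation.IsLocallyNilpotent {K A : Type*} [CommRing K] [CommRing A] [Algebra K A]
    (δ : Derivation K A A) : Prop :=
  ∀ a : A, ∃ n : ℕ, ((δ.toLinearMap : Module.End K A) ^ n) a = 0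

set_option linter.unusedSectionVars false

namespace P12test
variable {K A : Type*} [Field K] [CharZero K] [CommRing A] [IsDomain A] [Algebra K A]

def dp (δ : Derivation K A A) (n : ℕ) (x : A) : A := ((δ.toLinearMap : Module.End K A) ^ n) x

lemma dp_zero (δ : Derivation K A A) (x : A) : dp δ 0 x = x := rfl

lemma dp_one (δ : Derivation K A A) (x : A) : dp δ 1 x = δ x := by
  simp [dp]

lemma dp_succ (δ : Derivation K A A) (n : ℕ) (x : A) : dp δ (n+1) x = dp δ n (δ x) := by
  simp [dp, pow_succ, Module.End.mul_apply]

lemma dp_succ' (δ : Derivation K A A) (n : ℕ) (x : A) : dp δ (n+1) x = δ (dp δ n x) := by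
  simp [dp, pow_succ', Module.End.mul_apply]

lemma dp_add (δ : Derivation K A A) (m n : ℕ) (x : A) : dp δ (m+n) x = dp δ m (dp δ n x) := by
  simp [dp, pow_add, Module.End.mul_apply]

lemma dp_map_zero (δ : Derivation K A A) (n : ℕ) : dp δ n 0 = 0 := by simp [dp]

lemma dp_map_add (δ : Derivation K A A) (n : ℕ) (x y : A) :
    dp δ n (x + y) = dp δ n x + dp δ n y := by simp [dp]

lemma dp_map_sub (δ : Derivation K A A) (n : ℕ) (x y : A) :
    dp δ n (x - y) = dp δ n x - dp δ n y := by simp [dp]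

lemma dp_le (δ : Derivation K A A) {m n : ℕ} {x : A} (h : dp δ m x = 0) (hmn : m ≤ n) :
    dp δ n x = 0 := by
  obtain ⟨k, rfl⟩ := Nat.exists_eq_add_of_le hmn
  rw [Nat.add_comm, dp_add, h, dp_map_zero]

/-- derivation of product with a kernel element -/
lemma ker_deriv_mul (δ : Derivation K A A) {b : A} (hb : δ b = 0) (x : A) :
    δ (b * x) = b * δ x := by
  rw [Derivation.leibniz, hb, smul_eq_mul, smul_eq_mul, mul_zero, add_zero]

lemma ker_pow (δ : Derivation K A A) {b : A} (hb : δ b = 0) (n : ℕ) : δ (b ^ n) = 0 := by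
  induction n with
  | zero => simp
  | succ n ih => rw [pow_succ, Derivation.leibniz, hb, ih, smul_eq_mul, smul_eq_mul]; ring

lemma ker_dp_mul (δ : Derivation K A A) {b : A} (hb : δ b = 0) (n : ℕ) :
    ∀ x : A, dp δ n (b * x) = b * dp δ n x := by
  induction n with
  | zero => intro x; simp [dp_zero]
  | succ n ih => intro x; rw [dp_succ, ker_deriv_mul δ hb, ih, dp_succ]

end P12test
namespace P12test
variable {K A : Type*} [Field K] [CharZero K] [CommRing A] [IsDomain A] [Algebra K A]

lemma leibniz_vanish (δ : Derivation K A A) :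
    ∀ N m n : ℕ, ∀ x y : A, m + n ≤ N → dp δ (m+1) x = 0 → dp δ (n+1) y = 0 →
      dp δ (m+n+1) (x*y) = 0 := by
  intro N
  induction N with
  | zero =>
    intro m n x y hmn hx hy
    obtain ⟨rfl, rfl⟩ : m = 0 ∧ n = 0 := by omega
    rw [dp_one] at hx hy ⊢
    rw [Derivation.leibniz, hx, hy, smul_eq_mul, smul_eq_mul, mul_zero, mul_zero, add_zero]
  | succ N ih =>
    intro m n x y hmn hx hy
    match m, n with
    | m, 0 =>
      rw [dp_one] at hy
      rw [mul_comm, ker_dp_mul δ hy, hx, mul_zero]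
    | 0, n+1 =>
      rw [dp_one] at hx
      rw [ker_dp_mul δ hx]
      rw [show 0 + (n+1) + 1 = n + 2 by omega, hy, mul_zero]
    | m+1, n+1 =>
      rw [show m+1+(n+1)+1 = (m+1+n)+1+1 by omega, dp_succ, Derivation.leibniz,
        smul_eq_mul, smul_eq_mul, dp_map_add]
      have h1 : dp δ (m+1+n+1) (x * δ y) = 0 := by
        refine ih (m+1) n x (δ y) (by omega) hx ?_
        rw [← dp_succ]; exact hy
      have h2 : dp δ (n+1+m+1) (y * δ x) = 0 := by
        refine ih (n+1) m y (δ x) (by omega) hy ?_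
        rw [← dp_succ]; exact hx
      rw [h1, show m+1+n = n+1+m by omega, h2, add_zero]

lemma leibniz_top (δ : Derivation K A A) :
    ∀ N m n : ℕ, ∀ x y : A, m + n ≤ N → dp δ (m+1) x = 0 → dp δ (n+1) y = 0 →
      dp δ (m+n) (x*y) = (m+n).choose m • (dp δ m x * dp δ n y) := by
  intro N
  induction N with
  | zero =>
    intro m n x y hmn hx hy
    obtain ⟨rfl, rfl⟩ : m = 0 ∧ n = 0 := by omega
    simp [dp_zero]
  | succ N ih =>
    intro m n x y hmn hx hy
    match m, n with
    | m, 0 =>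
      rw [dp_one] at hy
      rw [mul_comm, Nat.add_zero, ker_dp_mul δ hy, Nat.choose_self, one_smul, dp_zero, mul_comm]
    | 0, n+1 =>
      rw [dp_one] at hx
      rw [ker_dp_mul δ hx, Nat.zero_add, Nat.choose_zero_right, one_smul, dp_zero]
    | m+1, n+1 =>
      have e1 : m+1+(n+1) = (m+1+n)+1 := by omega
      rw [e1, dp_succ, Derivation.leibniz, smul_eq_mul, smul_eq_mul, dp_map_add]
      have h1 : dp δ (m+1+n) (x * δ y) =
          (m+1+n).choose (m+1) • (dp δ (m+1) x * dp δ n (δ y)) := by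
        refine ih (m+1) n x (δ y) (by omega) hx ?_
        rw [← dp_succ]; exact hy
      have h2 : dp δ (n+1+m) (y * δ x) =
          (n+1+m).choose (n+1) • (dp δ (n+1) y * dp δ m (δ x)) := by
        refine ih (n+1) m y (δ x) (by omega) hy ?_
        rw [← dp_succ]; exact hx
      rw [h1, show m+1+n = n+1+m by omega, h2, ← dp_succ, ← dp_succ]
      rw [show (n+1+m).choose (n+1) = (n+1+m).choose m by
        rw [← Nat.choose_symm (by omega : n+1 ≤ n+1+m), show n+1+m-(n+1) = m by omega]]
      rw [mul_comm (dp δ (n+1) y) (dp δ (m+1) x), ← add_smul]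
      congr 1
      rw [show n+1+m+1 = (m+n+1)+1 by omega, show n+1+m = m+n+1 by omega]
      rw [Nat.choose_succ_succ (m+n+1) m]
      simp [Nat.succ_eq_add_one]
      omega

end P12test
namespace P12test
variable {K A : Type*} [Field K] [CharZero K] [CommRing A] [IsDomain A] [Algebra K A]

/-- exact degree exists for nonzero locally nilpotent elements -/
lemma exists_deg (δ : Derivation K A A) {x : A} (hx : x ≠ 0) (h : ∃ n, dp δ n x = 0) :
    ∃ n, dp δ n x ≠ 0 ∧ dp δ (n+1) x = 0 := by
  classical
  have h0 : dp δ (Nat.find h) x = 0 := Nat.find_spec h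
  have hne : Nat.find h ≠ 0 := by
    intro e
    rw [e, dp_zero] at h0
    exact hx h0
  obtain ⟨k, hk⟩ := Nat.exists_eq_succ_of_ne_zero hne
  refine ⟨k, ?_, by rwa [hk, Nat.succ_eq_add_one] at h0⟩
  exact Nat.find_min h (by omega)

/-- degree is multiplicative (both statements) -/
lemma deg_mul [Nontrivial A] (δ : Derivation K A A) {m n : ℕ} {x y : A}
    (hx : dp δ m x ≠ 0) (hx1 : dp δ (m+1) x = 0)
    (hy : dp δ n y ≠ 0) (hy1 : dp δ (n+1) y = 0) :
    dp δ (m+n) (x*y) ≠ 0 ∧ dp δ (m+n+1) (x*y) = 0 := by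
  haveI : CharZero A := charZero_of_injective_algebraMap (algebraMap K A).injective
  constructor
  · rw [leibniz_top δ (m+n) m n x y le_rfl hx1 hy1, nsmul_eq_mul]
    exact mul_ne_zero (Nat.cast_ne_zero.mpr (Nat.choose_pos (by omega : m ≤ m+n)).ne')
      (mul_ne_zero hx hy)
  · exact leibniz_vanish δ (m+n) m n x y le_rfl hx1 hy1

/-- iterated derivative of r * z when δ (δ r) = 0 -/
lemma slice_mul (δ : Derivation K A A) {r : A} (hr : δ (δ r) = 0) :
    ∀ (k : ℕ) (z : A), dp δ (k+1) (r * z) = r * dp δ (k+1) z + (k+1) • (δ r * dp δ k z) := by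
  intro k
  induction k with
  | zero =>
    intro z
    simp only [dp_one, dp_zero, Derivation.leibniz, smul_eq_mul, zero_add, one_smul]
    ring
  | succ k ih =>
    intro z
    rw [show k+1+1 = (k+1)+1 from rfl, dp_succ (δ := δ) (n := k+1) (x := r*z), Derivation.leibniz,
      smul_eq_mul, smul_eq_mul, dp_map_add, ih (δ z), ← dp_succ, ← dp_succ,
      mul_comm z (δ r), ker_dp_mul δ hr, succ_nsmul]
    ring_nf

/-- Taylor-style: powers of b = δ r push everything into adjoin(ker δ ∪ {r}) -/
lemma pow_mem_adjoin (δ : Derivation K A A) {r : A} (hr : δ (δ r) = 0) :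
    ∀ (m : ℕ) (x : A), dp δ (m+1) x = 0 →
      (δ r)^m * x ∈ Algebra.adjoin K ({a | δ a = 0} ∪ {r}) := by
  intro m
  induction m with
  | zero =>
    intro x hx
    rw [dp_one] at hx
    rw [pow_zero, one_mul]
    exact Algebra.subset_adjoin (Or.inl hx)
  | succ m ih =>
    intro x hx
    set S := Algebra.adjoin K ({a | δ a = 0} ∪ {r}) with hS
    set b := δ r with hbdef
    have hb : δ b = 0 := hr
    set u : A := algebraMap K A ((m+1 : K))⁻¹ with hu
    have hu0 : δ u = 0 := Derivation.map_algebraMap δ _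
    have humem : u ∈ S := Subalgebra.algebraMap_mem S _
    have hu1 : u * ((m+1 : ℕ) : A) = 1 := by
      rw [hu, show (((m+1:ℕ)) : A) = algebraMap K A ((m+1 : ℕ) : K) by
          rw [map_natCast], ← map_mul]
      rw [show ((m+1:ℕ) : K) = ((m:K)+1) by push_cast; ring]
      rw [inv_mul_cancel₀ (by exact_mod_cast Nat.cast_add_one_ne_zero (R := K) m), map_one]
    have hDx : dp δ (m+1) (δ x) = 0 := by rw [← dp_succ]; exact hx
    set v : A := b * x - u * (r * δ x) with hv
    have hvdeg : dp δ (m+1) v = 0 := by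
      have h1 : dp δ (m+1) (b * x) = b * dp δ (m+1) x := ker_dp_mul δ hb (m+1) x
      have h2 : dp δ (m+1) (u * (r * δ x)) = u * dp δ (m+1) (r * δ x) :=
        ker_dp_mul δ hu0 (m+1) _
      have h3 : dp δ (m+1) (r * δ x) = r * dp δ (m+1) (δ x) + (m+1) • (b * dp δ m (δ x)) :=
        slice_mul δ hr m (δ x)
      have h4 : dp δ m (δ x) = dp δ (m+1) x := (dp_succ δ m x).symm
      rw [hv, dp_map_sub]
      rw [h1, h2, h3, h4, hDx, mul_zero, zero_add, nsmul_eq_mul, ← mul_assoc, ← mul_assoc,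
        hu1, one_mul]
      ring
    have hvS : b^m * v ∈ S := ih v hvdeg
    have hDxS : b^m * δ x ∈ S := ih (δ x) hDx
    have key : b^(m+1) * x = b^m * v + u * (r * (b^m * δ x)) := by
      rw [hv]; ring
    rw [key]
    exact add_mem hvS (mul_mem humem (mul_mem (Algebra.subset_adjoin (Or.inr rfl)) hDxS))

end P12test

/-- Freudenburg's Principle 12 (as used in Lemma 2.1): two locally nilpotent derivations
with the same kernel differ by multiplication by kernel elements, and hence commute. -/
theorem stmt0 {K A : Type*} [Field K] [CharZero K] [CommRing A] [IsDomain A] [Algebra K A]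
    (hfg : Algebra.FiniteType K A)
    (δ₁ δ₂ : Derivation K A A)
    (h₁ : δ₁.IsLocallyNilpotent) (h₂ : δ₂.IsLocallyNilpotent)
    (hker : ∀ a : A, δ₁ a = 0 ↔ δ₂ a = 0) :
    ∃ f g : A, f ≠ 0 ∧ g ≠ 0 ∧ δ₁ f = 0 ∧ δ₂ g = 0 ∧
      (∀ a : A, f * δ₁ a = g * δ₂ a) ∧
      (∀ a : A, δ₁ (δ₂ a) = δ₂ (δ₁ a)) := by
  classical
  open P12test in
  by_cases h0 : ∀ a : A, δ₁ a = 0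
  · exact ⟨1, 1, one_ne_zero, one_ne_zero, h0 1, (hker 1).1 (h0 1),
      fun a => by rw [h0 a, (hker a).1 (h0 a)],
      fun a => by rw [h0 (δ₂ a), (hker (δ₁ a)).1 (h0 (δ₁ a))]⟩
  · push_neg at h0
    obtain ⟨a₀, ha₀⟩ := h0
    have ha0ne : a₀ ≠ 0 := fun e => ha₀ (by rw [e, map_zero])
    obtain ⟨n, hn, hn1⟩ := P12test.exists_deg δ₁ ha0ne (h₁ a₀)
    have hn0 : n ≠ 0 := by
      intro e
      rw [e] at hn1
      exact ha₀ (by rw [← P12test.dp_one δ₁ a₀]; exact hn1)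
    obtain ⟨k, rfl⟩ := Nat.exists_eq_succ_of_ne_zero hn0
    set r := P12test.dp δ₁ k a₀ with hrdef
    have hr1 : δ₁ r ≠ 0 := by
      rw [hrdef, ← P12test.dp_succ' δ₁ k a₀]
      exact hn
    have hr2 : δ₁ (δ₁ r) = 0 := by
      have h : P12test.dp δ₁ (k+1+1) a₀ = 0 := hn1
      rw [P12test.dp_succ', P12test.dp_succ'] at h
      exact h
    set b := δ₁ r with hbdef
    set c := δ₂ r with hcdef
    have hb1 : δ₁ b = 0 := hr2
    have hb2 : δ₂ b = 0 := (hker b).1 hb1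
    have hbne : b ≠ 0 := hr1
    have hcne : c ≠ 0 := fun e => hr1 ((hker r).2 e)
    have hSΔ : ∀ x ∈ Algebra.adjoin K ({a | δ₁ a = 0} ∪ {r}), c * δ₁ x = b * δ₂ x := by
      intro x hx
      induction hx using Algebra.adjoin_induction with
      | mem z hz =>
        rcases hz with hz | hz
        · have hz1 : δ₁ z = 0 := hz
          rw [hz1, (hker z).1 hz1, mul_zero, mul_zero]
        · rw [Set.mem_singleton_iff] at hz
          subst hz
          rw [← hbdef, ← hcdef, mul_comm]
      | algebraMap k =>
        rw [Derivation.map_algebraMap, Derivation.map_algebraMap, mul_zero, mul_zero]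
      | add x y hx hy ihx ihy =>
        rw [map_add, map_add, mul_add, mul_add, ihx, ihy]
      | mul x y hx hy ihx ihy =>
        rw [Derivation.leibniz, Derivation.leibniz, smul_eq_mul, smul_eq_mul, smul_eq_mul,
          smul_eq_mul]
        linear_combination x * ihy + y * ihx
    have hI : ∀ x : A, c * δ₁ x = b * δ₂ x := by
      intro x
      obtain ⟨n', hn'⟩ := h₁ x
      have hx1 : P12test.dp δ₁ (n'+1) x = 0 := by
        rw [P12test.dp_succ', show P12test.dp δ₁ n' x = 0 from hn', map_zero]
      have hmem := P12test.pow_mem_adjoin δ₁ hr2 n' x hx1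
      have h := hSΔ _ hmem
      have e1 : δ₁ (b^n' * x) = b^n' * δ₁ x :=
        P12test.ker_deriv_mul δ₁ (P12test.ker_pow δ₁ hb1 n') x
      have e2 : δ₂ (b^n' * x) = b^n' * δ₂ x :=
        P12test.ker_deriv_mul δ₂ (P12test.ker_pow δ₂ hb2 n') x
      rw [e1, e2] at h
      exact mul_left_cancel₀ (pow_ne_zero n' hbne) (by linear_combination h)
    have hc1 : δ₁ c = 0 := by
      by_contra hc
      obtain ⟨d, hd, hd1⟩ := P12test.exists_deg δ₁ hcne (h₁ c)
      have hd0 : d ≠ 0 := by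
        intro e
        rw [e] at hd1
        exact hc (by rw [← P12test.dp_one δ₁ c]; exact hd1)
      have claim : ∀ m : ℕ, ∃ e : ℕ, 1 ≤ e ∧ P12test.dp δ₁ e (b^m * P12test.dp δ₂ m r) ≠ 0 ∧
          P12test.dp δ₁ (e+1) (b^m * P12test.dp δ₂ m r) = 0 := by
        intro m
        induction m with
        | zero =>
          refine ⟨1, le_rfl, ?_, ?_⟩
          · rw [pow_zero, one_mul, P12test.dp_zero, P12test.dp_one]; exact hr1
          · rw [pow_zero, one_mul, P12test.dp_zero, P12test.dp_succ', P12test.dp_one]; exact hr2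
        | succ m ih =>
          obtain ⟨e, he1, he2, he3⟩ := ih
          obtain ⟨e', rfl⟩ := Nat.exists_eq_succ_of_ne_zero (by omega : e ≠ 0)
          set t := b^m * P12test.dp δ₂ m r with ht
          have step : b^(m+1) * P12test.dp δ₂ (m+1) r = c * δ₁ t := by
            rw [P12test.dp_succ' δ₂ m r, ht,
              P12test.ker_deriv_mul δ₁ (P12test.ker_pow δ₁ hb1 m) (P12test.dp δ₂ m r)]
            have h5 := hI (P12test.dp δ₂ m r)
            linear_combination (-(b^m)) * h5
          have hz1 : P12test.dp δ₁ e' (δ₁ t) ≠ 0 := by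
            rw [← P12test.dp_succ]; exact he2
          have hz2 : P12test.dp δ₁ (e'+1) (δ₁ t) = 0 := by
            rw [← P12test.dp_succ]; exact he3
          have hdm := P12test.deg_mul δ₁ hd hd1 hz1 hz2
          refine ⟨d+e', by omega, ?_, ?_⟩
          · rw [step]; exact hdm.1
          · rw [step]; exact hdm.2
      obtain ⟨N, hN⟩ := h₂ r
      obtain ⟨e, he1, he2, _⟩ := claim N
      apply he2
      rw [show P12test.dp δ₂ N r = 0 from hN, mul_zero, P12test.dp_map_zero]
    refine ⟨c, b, hcne, hbne, hc1, hb2, hI, ?_⟩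
    intro a
    apply mul_left_cancel₀ hbne
    have h1 := hI (δ₁ a)
    have h2 := congrArg δ₁ (hI a)
    rw [P12test.ker_deriv_mul δ₁ hc1, P12test.ker_deriv_mul δ₁ hb1] at h2
    rw [← h2]
    exact h1
end

section
/- Let P ⊆ ℤⁿ be a finitely generated submonoid which generates ℤⁿ as a group, and let σ∨ = ℚ≥0·P ⊆ ℚⁿ be the rational cone generated by P. Then there exists d ∈ P such that (d + σ∨) ∩ ℤⁿ ⊆ P, i.e., P has a saturation point. -/
/-!
Write `P` as the closure of a finite set `S`. If `u - d = q • p` with `p = ∑ f y • y`, rounding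
the coefficients `q * f y` down gives `a ∈ P` with `u - d - a` in the box `|·ᵢ| ≤ ∑_{y ∈ S} |yᵢ|`.
Since `P - P = ℤⁿ`, each lattice point `w` of the box has some `e w ∈ P` with `w + e w ∈ P`, and
`d = ∑_w e w` works: `u = a + (u - d - a) + d`.
-/

/-- The rational cone `σ∨ = ℚ≥0 · P` generated by a submonoid `P ⊆ ℤⁿ`:
since `P` is closed under addition, every nonnegative rational combination of elements of `P`
is a nonnegative rational multiple of a single element of `P`. -/
def coneOfMonoid {n : ℕ} (P : AddSubmonoid (Fin n → ℤ)) : Set (Fin n → ℚ) :=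
  {x | ∃ p ∈ P, ∃ q : ℚ, 0 ≤ q ∧ x = q • fun i => ((p i : ℤ) : ℚ)}

theorem AddSubmonoid.exists_add_mem_of_mem_closure {G : Type*} [AddCommGroup G]
    (P : AddSubmonoid G) {x : G} (hx : x ∈ AddSubgroup.closure (P : Set G)) :
    ∃ e ∈ P, x + e ∈ P := by
  induction hx using AddSubgroup.closure_induction with
  | mem x hx => exact ⟨0, P.zero_mem, by simpa using hx⟩
  | zero => exact ⟨0, P.zero_mem, by simp⟩
  | add x y _ _ hx hy =>
    obtain ⟨e, he, hxe⟩ := hx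
    obtain ⟨f, hf, hyf⟩ := hy
    exact ⟨e + f, P.add_mem he hf, by simpa [add_add_add_comm] using P.add_mem hxe hyf⟩
  | neg x _ hx =>
    obtain ⟨e, he, hxe⟩ := hx
    exact ⟨x + e, hxe, by simpa using he⟩

theorem AddSubmonoid.exists_mem_forall_add_mem {G : Type*} [AddCommGroup G]
    {P : AddSubmonoid G} (hgen : AddSubgroup.closure (P : Set G) = ⊤) (T : Finset G) :
    ∃ d ∈ P, ∀ w ∈ T, w + d ∈ P := by
  classical
  choose e he hxe using fun x : G => P.exists_add_mem_of_mem_closure (hgen ▸ AddSubgroup.mem_top x)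
  refine ⟨∑ x ∈ T, e x, P.sum_mem fun x _ => he x, fun w hw => ?_⟩
  rw [← Finset.add_sum_erase T e hw, ← add_assoc]
  exact P.add_mem (hxe w) (P.sum_mem fun x _ => he x)

theorem abs_sum_sub_floor_mul_le {α K : Type*} [Field K] [LinearOrder K] [IsStrictOrderedRing K]
    [FloorSemiring K] (S : Finset α) {t : α → K} (ht : ∀ y, 0 ≤ t y) (c : α → K) :
    |∑ y ∈ S, (t y - ⌊t y⌋₊) * c y| ≤ ∑ y ∈ S, |c y| := by
  refine (Finset.abs_sum_le_sum_abs _ _).trans (Finset.sum_le_sum fun y _ => ?_)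
  have hfract : |t y - ⌊t y⌋₊| ≤ 1 := abs_le.2
    ⟨by linarith [Nat.floor_le (ht y)], by linarith [Nat.lt_floor_add_one (t y)]⟩
  rw [abs_mul]
  exact mul_le_of_le_one_left (abs_nonneg _) hfract

theorem AddSubmonoid.exists_mem_closure_abs_sub_le {ι : Type*} (S : Finset (ι → ℤ))
    {p v : ι → ℤ} (hp : p ∈ AddSubmonoid.closure (S : Set (ι → ℤ))) {q : ℚ} (hq : 0 ≤ q)
    (hv : ∀ i, (v i : ℚ) = q * p i) :
    ∃ a ∈ AddSubmonoid.closure (S : Set (ι → ℤ)), ∀ i, |v i - a i| ≤ ∑ y ∈ S, |y i| := by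
  obtain ⟨f, -, rfl⟩ := AddSubmonoid.mem_closure_finset.1 hp
  refine ⟨∑ y ∈ S, ⌊q * f y⌋₊ • y,
    AddSubmonoid.sum_mem _ fun y hy => AddSubmonoid.nsmul_mem _ (AddSubmonoid.subset_closure hy) _,
    fun i => ?_⟩
  have hcast : ((v i - (∑ y ∈ S, ⌊q * f y⌋₊ • y) i : ℤ) : ℚ)
      = ∑ y ∈ S, (q * f y - ⌊q * f y⌋₊) * y i := by
    simp [hv, Finset.mul_sum, sub_mul, mul_assoc]
  exact_mod_cast (congrArg abs hcast).trans_le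
    (abs_sum_sub_floor_mul_le S (fun y => by positivity) _)

/-- Lemma 3.2: a finitely generated submonoid `P ⊆ ℤⁿ` generating `ℤⁿ` as a group
has a saturation point `d`, i.e. every lattice point of `d + σ∨` belongs to `P`. -/
theorem stmt3 {n : ℕ} (P : AddSubmonoid (Fin n → ℤ)) (hfg : P.FG)
    (hgen : AddSubgroup.closure (P : Set (Fin n → ℤ)) = ⊤) :
    ∃ d ∈ P, ∀ u : Fin n → ℤ,
      (fun i => ((u i - d i : ℤ) : ℚ)) ∈ coneOfMonoid P → u ∈ P := by
  obtain ⟨S, rfl⟩ := hfg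
  set B : Fin n → ℤ := fun i => ∑ y ∈ S, |y i|
  obtain ⟨d, hd, hdB⟩ := AddSubmonoid.exists_mem_forall_add_mem hgen (Finset.Icc (-B) B)
  refine ⟨d, hd, fun u ⟨p, hp, q, hq, hpq⟩ => ?_⟩
  obtain ⟨a, ha, hbound⟩ := AddSubmonoid.exists_mem_closure_abs_sub_le S hp hq (v := u - d)
    fun i => by simpa using congrFun hpq i
  have hbox : u - d - a ∈ Finset.Icc (-B) B := by
    simpa [Finset.mem_Icc, Pi.le_def, abs_le, forall_and] using hbound
  convert AddSubmonoid.add_mem _ ha (hdB _ hbox) using 1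
  abel
end

section
/- Let P ⊆ M = ℤⁿ be a finitely generated submonoid generating M as a group, σ∨ = ℚ≥0·P with dual cone σ, P_sat = M ∩ σ∨, and ρ an extremal ray of σ with primitive generator n_ρ. Suppose e ∈ M is a Demazure root for ρ such that (P + e) ∩ P_sat ⊆ P. Then the K-linear map δ_e on the monoid algebra K[P] defined on basis elements by δ_e(χ^m) = ⟨m, n_ρ⟩·χ^{m+e} is a well-defined locally nilpotent derivation of K[P]. -/
/-!
Write `ℓ = ⟨·, n_ρ⟩`, an additive map `M → ℤ` that is nonnegative on `P` with `ℓ e = -1`. The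
hypotheses on `e` give `m + e ∈ P` whenever `m ∈ P` and `ℓ m ≠ 0`, which is all the
Leibniz rule `δ(χ^{a+b}) = χ^a δ(χ^b) + χ^b δ(χ^a)` needs: both sides are `ℓ(a + b) χ^{a+b+e}`.
Each application of `δ` lowers `ℓ` by one, so `δ^{ℓ m + 1}` kills `χ^m`, and local nilpotency
follows since the monomials span `K[P]`.
-/

/-- The standard pairing between the lattices `M = ℤⁿ` and `N = ℤⁿ`. -/
def pairZ {n : ℕ} (x y : Fin n → ℤ) : ℤ := ∑ i, x i * y i

theorem Module.End.exists_pow_apply_eq_zero_of_basis {R V ι : Type*} [CommRing R]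
    [AddCommGroup V] [Module R V] (b : Module.Basis ι R V) {f : Module.End R V}
    (h : ∀ i, ∃ N : ℕ, (f ^ N) (b i) = 0) (x : V) : ∃ N : ℕ, (f ^ N) x = 0 := by
  have htop : f.maxGenEigenspace 0 = ⊤ := by
    refine eq_top_iff.2 (b.span_eq ▸ Submodule.span_le.2 ?_)
    rintro _ ⟨i, rfl⟩
    simpa using h i
  have hx : x ∈ f.maxGenEigenspace 0 := htop ▸ Submodule.mem_top
  simpa using hx

namespace AddMonoidAlgebra

section Derivation

variable {R G : Type*} [CommRing R] [AddCommMonoid G]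

noncomputable def mkDerivationOfSingle (D : R[G] →ₗ[R] R[G])
    (h : ∀ a b, D (single (a + b) 1) = single a 1 * D (single b 1) + single b 1 * D (single a 1)) :
    Derivation R R[G] R[G] where
  toLinearMap := D
  map_one_eq_zero' := by
    have h0 := h 0 0
    rw [add_zero, ← one_def, one_mul, left_eq_add] at h0
    exact h0
  leibniz' x y := by
    simp only [smul_eq_mul]
    induction x using induction_linear with
    | zero => simp
    | add x₁ x₂ h₁ h₂ => simp only [add_mul, map_add, h₁, h₂]; ring
    | single a r =>
      induction y using induction_linear with
      | zero => simp
      | add y₁ y₂ h₁ h₂ => simp only [mul_add, map_add, h₁, h₂]; ring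
      | single b s =>
        have hsingle : ∀ (c : G) (t : R), single c t = t • single c (1 : R) := by simp
        rw [single_mul_single, hsingle (a + b), hsingle a, hsingle b, map_smul, map_smul,
          map_smul, h]
        simp only [smul_mul_smul_comm, smul_add, mul_comm s r]

end Derivation

section Restricted

variable {R M : Type*} [Semiring R] [AddCommMonoid M] (P : AddSubmonoid M)

open Classical in
noncomputable def restrictedSingle (m : M) (r : R) : R[P] :=
  if h : m ∈ P then single ⟨m, h⟩ r else 0

variable {P}

theorem restrictedSingle_of_mem {m : M} (h : m ∈ P) (r : R) :
    restrictedSingle P m r = single ⟨m, h⟩ r :=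
  dif_pos h

theorem restrictedSingle_of_notMem {m : M} (h : m ∉ P) (r : R) : restrictedSingle P m r = 0 :=
  dif_neg h

@[simp]
theorem restrictedSingle_zero (m : M) : restrictedSingle P m (0 : R) = 0 := by
  unfold restrictedSingle; split <;> simp

theorem restrictedSingle_add (m : M) (r s : R) :
    restrictedSingle P m (r + s) = restrictedSingle P m r + restrictedSingle P m s := by
  unfold restrictedSingle; split <;> simp

theorem smul_restrictedSingle (m : M) (r s : R) :
    r • restrictedSingle P m s = restrictedSingle P m (r * s) := by
  unfold restrictedSingle; split <;> simp

theorem single_mul_restrictedSingle (a : P) {m : M} (hm : m ∈ P) (r s : R) :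
    single a r * restrictedSingle P m s = restrictedSingle P (a + m) (r * s) := by
  rw [restrictedSingle_of_mem hm, restrictedSingle_of_mem (P.add_mem a.2 hm), single_mul_single]
  rfl

end Restricted

section Demazure

variable {R M : Type*} [CommRing R] [AddCommMonoid M] (P : AddSubmonoid M) (ℓ : M →+ ℤ) (e : M)

noncomputable def demazureLinearMap : R[P] →ₗ[R] R[P] :=
  (basis P R).constr R fun m => restrictedSingle P (m + e) (ℓ m : R)

variable {P ℓ e}

theorem demazureLinearMap_single (m : P) (r : R) :
    demazureLinearMap P ℓ e (single m r) = restrictedSingle P (m + e) (r * ℓ m) := by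
  have hm : single m r = r • basis P R m := by simp
  rw [hm, map_smul, demazureLinearMap, Module.Basis.constr_basis, smul_restrictedSingle]

theorem demazureLinearMap_pow_single_eq_zero (hℓ : ∀ m ∈ P, 0 ≤ ℓ m) (he : ℓ e < 0) (N : ℕ) :
    ∀ (m : P) (r : R), ℓ m < N → (demazureLinearMap P ℓ e ^ N) (single m r) = 0 := by
  induction N with
  | zero => intro m r hm; exact absurd (hℓ m m.2) (by omega)
  | succ N ih =>
    intro m r hm
    rw [pow_succ, Module.End.mul_apply, demazureLinearMap_single]
    by_cases h : (m : M) + e ∈ P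
    · rw [restrictedSingle_of_mem h]
      exact ih ⟨_, h⟩ _ (by rw [map_add]; omega)
    · rw [restrictedSingle_of_notMem h, map_zero]

variable (hshift : ∀ m ∈ P, ℓ m ≠ 0 → m + e ∈ P)
include hshift

theorem single_mul_demazureLinearMap_single (a b : P) :
    single a 1 * demazureLinearMap P ℓ e (single b 1) =
      restrictedSingle P (a + b + e) (ℓ b : R) := by
  rw [demazureLinearMap_single, one_mul]
  by_cases hb : ℓ b = 0
  · simp [hb]
  · rw [single_mul_restrictedSingle a (hshift b b.2 hb), one_mul, add_assoc]

noncomputable def demazureDerivation : Derivation R R[P] R[P] :=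
  mkDerivationOfSingle (demazureLinearMap P ℓ e) fun a b => by
    rw [single_mul_demazureLinearMap_single hshift, single_mul_demazureLinearMap_single hshift,
      demazureLinearMap_single, one_mul, add_comm (b : M), ← restrictedSingle_add,
      AddMemClass.coe_add, map_add, Int.cast_add, add_comm (ℓ a : R)]

theorem demazureDerivation_single (m : P) (r : R) :
    demazureDerivation hshift (single m r) = restrictedSingle P (m + e) (r * ℓ m) :=
  demazureLinearMap_single m r

theorem exists_pow_demazureDerivation_apply_eq_zero (hℓ : ∀ m ∈ P, 0 ≤ ℓ m) (he : ℓ e < 0)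
    (x : R[P]) : ∃ N : ℕ, ((demazureDerivation hshift).toLinearMap ^ N) x = 0 :=
  Module.End.exists_pow_apply_eq_zero_of_basis (basis P R) (fun m =>
    ⟨(ℓ m).toNat + 1, demazureLinearMap_pow_single_eq_zero hℓ he _ m 1 (by omega)⟩) x

end Demazure

end AddMonoidAlgebra

def pairZHom {n : ℕ} (v : Fin n → ℤ) : (Fin n → ℤ) →+ ℤ :=
  AddMonoidHom.mk' (pairZ · v) fun a b => by simp [pairZ, add_mul, Finset.sum_add_distrib]

@[simp]
theorem pairZHom_apply {n : ℕ} (v x : Fin n → ℤ) : pairZHom v x = pairZ x v :=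
  rfl

theorem add_mem_of_pairZ_ne_zero {n k : ℕ} {P : AddSubmonoid (Fin n → ℤ)}
    {nρ : Fin k → (Fin n → ℤ)} {i₀ : Fin k} {e : Fin n → ℤ}
    (hPsat : ∀ m ∈ P, ∀ j, 0 ≤ pairZ m (nρ j)) (he₁ : pairZ e (nρ i₀) = -1)
    (he₂ : ∀ j, j ≠ i₀ → 0 ≤ pairZ e (nρ j))
    (hPe : ∀ m ∈ P, (∀ j, 0 ≤ pairZ (m + e) (nρ j)) → m + e ∈ P) :
    ∀ m ∈ P, pairZHom (nρ i₀) m ≠ 0 → m + e ∈ P := by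
  intro m hm hne
  refine hPe m hm fun j => ?_
  rw [← pairZHom_apply, map_add, pairZHom_apply, pairZHom_apply]
  have hmj := hPsat m hm j
  rcases eq_or_ne j i₀ with rfl | hj
  · rw [pairZHom_apply] at hne
    omega
  · have := he₂ j hj
    omega

theorem stmt8_general {K : Type*} [Field K] {n k : ℕ}
    (P : AddSubmonoid (Fin n → ℤ))
    (nρ : Fin k → (Fin n → ℤ))
    (hPsat : ∀ m ∈ P, ∀ j, 0 ≤ pairZ m (nρ j))
    (i₀ : Fin k) (e : Fin n → ℤ)
    (he₁ : pairZ e (nρ i₀) = -1)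
    (he₂ : ∀ j, j ≠ i₀ → 0 ≤ pairZ e (nρ j))
    (hPe : ∀ m ∈ P, (∀ j, 0 ≤ pairZ (m + e) (nρ j)) → m + e ∈ P) :
    ∃ δ : Derivation K (AddMonoidAlgebra K P) (AddMonoidAlgebra K P),
      (∀ (m : P) (h : (m : Fin n → ℤ) + e ∈ P),
        δ (AddMonoidAlgebra.single m 1) =
          pairZ (m : Fin n → ℤ) (nρ i₀) • (AddMonoidAlgebra.single (⟨(m : Fin n → ℤ) + e, h⟩ : P) 1 :
            AddMonoidAlgebra K P)) ∧
      (∀ m : P, (m : Fin n → ℤ) + e ∉ P → δ (AddMonoidAlgebra.single m 1) = 0) ∧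
      (∀ x : AddMonoidAlgebra K P, ∃ N : ℕ,
        ((δ.toLinearMap : Module.End K (AddMonoidAlgebra K P)) ^ N) x = 0) := by
  have hshift := add_mem_of_pairZ_ne_zero hPsat he₁ he₂ hPe
  have hℓ : ∀ m ∈ P, 0 ≤ pairZHom (nρ i₀) m := fun m hm => hPsat m hm i₀
  have he : pairZHom (nρ i₀) e < 0 := by simp [he₁]
  refine ⟨AddMonoidAlgebra.demazureDerivation hshift, fun m h => ?_, fun m h => ?_,
    AddMonoidAlgebra.exists_pow_demazureDerivation_apply_eq_zero hshift hℓ he⟩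
  · rw [AddMonoidAlgebra.demazureDerivation_single, AddMonoidAlgebra.restrictedSingle_of_mem h,
      ← Int.cast_smul_eq_zsmul K, AddMonoidAlgebra.smul_single', one_mul, mul_one]
    rfl
  · rw [AddMonoidAlgebra.demazureDerivation_single, AddMonoidAlgebra.restrictedSingle_of_notMem h]

/-- Given a Demazure root `e` for the extremal ray `ρ = ρ_{i₀}` of the dual cone `σ`
(with extremal rays generated by the `nρ j`, so that `P_sat = {m | ∀ j, ⟨m, nρ j⟩ ≥ 0}`)
such that `(P + e) ∩ P_sat ⊆ P`, the formula `δ_e(χ^m) = ⟨m, n_ρ⟩ χ^{m+e}` defines a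
locally nilpotent derivation of the monoid algebra `K[P]`. -/
theorem stmt8 {K : Type*} [Field K] [CharZero K] {n k : ℕ}
    (P : AddSubmonoid (Fin n → ℤ)) (hfg : P.FG)
    (hgen : AddSubgroup.closure (P : Set (Fin n → ℤ)) = ⊤)
    (nρ : Fin k → (Fin n → ℤ))
    (hPsat : ∀ m ∈ P, ∀ j, 0 ≤ pairZ m (nρ j))
    (i₀ : Fin k) (e : Fin n → ℤ)
    (he₁ : pairZ e (nρ i₀) = -1)
    (he₂ : ∀ j, j ≠ i₀ → 0 ≤ pairZ e (nρ j))
    (hPe : ∀ m ∈ P, (∀ j, 0 ≤ pairZ (m + e) (nρ j)) → m + e ∈ P) :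
    ∃ δ : Derivation K (AddMonoidAlgebra K P) (AddMonoidAlgebra K P),
      (∀ (m : P) (h : (m : Fin n → ℤ) + e ∈ P),
        δ (AddMonoidAlgebra.single m 1) =
          pairZ (m : Fin n → ℤ) (nρ i₀) • (AddMonoidAlgebra.single (⟨(m : Fin n → ℤ) + e, h⟩ : P) 1 :
            AddMonoidAlgebra K P)) ∧
      (∀ m : P, (m : Fin n → ℤ) + e ∉ P → δ (AddMonoidAlgebra.single m 1) = 0) ∧
      (∀ x : AddMonoidAlgebra K P, ∃ N : ℕ,
        ((δ.toLinearMap : Module.End K (AddMonoidAlgebra K P)) ^ N) x = 0) :=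
  stmt8_general P nρ hPsat i₀ e he₁ he₂ hPe
end

section
/- With notation as above (P a finitely generated submonoid of M = ℤⁿ generating M, σ the dual cone, ρ an extremal ray, e a Demazure root for ρ with (P+e) ∩ P_sat ⊆ P), the kernel of the locally nilpotent derivation δ_e on K[P] is the subalgebra ⊕_{m ∈ P ∩ ρ̂} K·χ^m, where ρ̂ = ρ⊥ ∩ σ∨. -/
namespace AddMonoidAlgebra

variable {R G H : Type*} [Semiring R]

theorem coeff_apply_eq_mul_of_map_single (δ : AddMonoidAlgebra R G →ₗ[R] AddMonoidAlgebra R H)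
    (c : G → R) (f : G → H) (hf : Set.InjOn f {m | c m ≠ 0})
    (hδ : ∀ m, δ (single m 1) = c m • single (f m) 1) (x : AddMonoidAlgebra R G) {m₀ : G}
    (hm₀ : c m₀ ≠ 0) : (δ x).coeff (f m₀) = x.coeff m₀ * c m₀ := by
  have hx : δ x = ∑ m ∈ x.coeff.support, (x.coeff m * c m) • single (f m) 1 := by
    conv_lhs => rw [← sum_coeff_single x]
    rw [Finsupp.sum, map_sum]
    refine Finset.sum_congr rfl fun m _ => ?_
    rw [← mul_one (x.coeff m), ← smul_single', map_smul, hδ, smul_smul, mul_one]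
  classical
  rw [hx, coeff_sum, Finsupp.finsetSum_apply, Finset.sum_eq_single m₀]
  · simp
  · intro m _ hm
    by_cases hc : c m = 0
    · simp [hc]
    · simp [coeff_single, hf.eq_iff hc hm₀, hm]
  · intro h
    simp [Finsupp.notMem_support_iff.mp h]

theorem apply_eq_zero_iff_of_map_single [NoZeroDivisors R]
    (δ : AddMonoidAlgebra R G →ₗ[R] AddMonoidAlgebra R H)
    (c : G → R) (f : G → H) (hf : Set.InjOn f {m | c m ≠ 0})
    (hδ : ∀ m, δ (single m 1) = c m • single (f m) 1) (x : AddMonoidAlgebra R G) :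
    δ x = 0 ↔ ∀ m ∈ x.coeff.support, c m = 0 := by
  refine ⟨fun hx m hm => ?_, fun h => ?_⟩
  · by_contra hc
    have := coeff_apply_eq_mul_of_map_single δ c f hf hδ x hc
    rw [hx, coeff_zero, Finsupp.zero_apply, eq_comm] at this
    exact mul_ne_zero (Finsupp.mem_support_iff.mp hm) hc this
  · conv_lhs => rw [← sum_coeff_single x]
    rw [Finsupp.sum, map_sum]
    refine Finset.sum_eq_zero fun m hm => ?_
    rw [← mul_one (x.coeff m), ← smul_single', map_smul, hδ, h m hm, zero_smul, smul_zero]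

end AddMonoidAlgebra

theorem pairZ_add {n : ℕ} (x y v : Fin n → ℤ) :
    pairZ (x + y) v = pairZ x v + pairZ y v := by
  simp [pairZ, add_mul, Finset.sum_add_distrib]

theorem add_mem_of_pairZ_pos {n k : ℕ} {P : AddSubmonoid (Fin n → ℤ)} {nρ : Fin k → Fin n → ℤ}
    {i₀ : Fin k} {e : Fin n → ℤ}
    (hPsat : ∀ m ∈ P, ∀ j, 0 ≤ pairZ m (nρ j))
    (he₁ : pairZ e (nρ i₀) = -1)
    (he₂ : ∀ j, j ≠ i₀ → 0 ≤ pairZ e (nρ j))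
    (hPe : ∀ m ∈ P, (∀ j, 0 ≤ pairZ (m + e) (nρ j)) → m + e ∈ P)
    {m : Fin n → ℤ} (hm : m ∈ P) (hpos : 0 < pairZ m (nρ i₀)) : m + e ∈ P := by
  refine hPe m hm fun j => ?_
  rw [pairZ_add]
  by_cases hj : j = i₀
  · subst hj
    omega
  · linarith [hPsat m hm j, he₂ j hj]

theorem stmt9_general {K : Type*} [Field K] [CharZero K] {n k : ℕ}
    (P : AddSubmonoid (Fin n → ℤ))
    (nρ : Fin k → (Fin n → ℤ))
    (hPsat : ∀ m ∈ P, ∀ j, 0 ≤ pairZ m (nρ j))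
    (i₀ : Fin k) (e : Fin n → ℤ)
    (he₁ : pairZ e (nρ i₀) = -1)
    (he₂ : ∀ j, j ≠ i₀ → 0 ≤ pairZ e (nρ j))
    (hPe : ∀ m ∈ P, (∀ j, 0 ≤ pairZ (m + e) (nρ j)) → m + e ∈ P)
    (δ : Derivation K (AddMonoidAlgebra K P) (AddMonoidAlgebra K P))
    (hδ₁ : ∀ (m : P) (h : (m : Fin n → ℤ) + e ∈ P),
      δ (AddMonoidAlgebra.single m 1) =
        pairZ (m : Fin n → ℤ) (nρ i₀) • (AddMonoidAlgebra.single (⟨(m : Fin n → ℤ) + e, h⟩ : P) 1 :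
          AddMonoidAlgebra K P))
    (hδ₂ : ∀ m : P, (m : Fin n → ℤ) + e ∉ P → δ (AddMonoidAlgebra.single m 1) = 0) :
    ∀ x : AddMonoidAlgebra K P,
      δ x = 0 ↔ ∀ m ∈ x.coeff.support, pairZ (m : Fin n → ℤ) (nρ i₀) = 0 := by
  intro x
  -- off the face `ρ̂` the translate `m + e` stays in `P`; on it, where `f` sends `m` is irrelevant
  have hshift (m : P) :
      ∃ m' : P, pairZ (m : Fin n → ℤ) (nρ i₀) ≠ 0 → (m' : Fin n → ℤ) = m + e := by
    by_cases hc : pairZ (m : Fin n → ℤ) (nρ i₀) = 0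
    · exact ⟨m, fun h => absurd hc h⟩
    · exact ⟨⟨_, add_mem_of_pairZ_pos hPsat he₁ he₂ hPe m.2
        ((hPsat _ m.2 i₀).lt_of_ne' hc)⟩, fun _ => rfl⟩
  choose f hf using hshift
  have hinj : Set.InjOn f {m | (pairZ (m : Fin n → ℤ) (nρ i₀) : K) ≠ 0} := fun m hm m' hm' h => by
    simp only [Set.mem_ofPred_eq, Int.cast_ne_zero] at hm hm'
    exact Subtype.ext (add_right_cancel ((hf m hm).symm.trans ((congrArg _ h).trans (hf m' hm'))))
  have hδ (m : P) : δ (AddMonoidAlgebra.single m 1) =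
      (pairZ (m : Fin n → ℤ) (nρ i₀) : K) • AddMonoidAlgebra.single (f m) 1 := by
    by_cases hc : pairZ (m : Fin n → ℤ) (nρ i₀) = 0
    · rw [hc, Int.cast_zero, zero_smul]
      by_cases hm : (m : Fin n → ℤ) + e ∈ P
      · rw [hδ₁ m hm, hc, zero_smul]
      · exact hδ₂ m hm
    · have hm : (m : Fin n → ℤ) + e ∈ P := hf m hc ▸ (f m).2
      rw [hδ₁ m hm, Int.cast_smul_eq_zsmul, show f m = ⟨_, hm⟩ from Subtype.ext (hf m hc)]
  simpa only [Int.cast_eq_zero, Derivation.coeFn_coe] using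
    AddMonoidAlgebra.apply_eq_zero_iff_of_map_single δ.toLinearMap _ f hinj hδ x

/-- The kernel of the locally nilpotent derivation `δ_e` (given by
`δ_e(χ^m) = ⟨m, n_ρ⟩ χ^{m+e}`) on `K[P]` is the subalgebra `⊕_{m ∈ P ∩ ρ̂} K χ^m`,
i.e. an element lies in the kernel iff every monomial in its support lies on the
face `ρ̂ = ρ⊥ ∩ σ∨`, i.e. pairs to `0` with `n_ρ`. -/
theorem stmt9 {K : Type*} [Field K] [CharZero K] {n k : ℕ}
    (P : AddSubmonoid (Fin n → ℤ)) (hfg : P.FG)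
    (hgen : AddSubgroup.closure (P : Set (Fin n → ℤ)) = ⊤)
    (nρ : Fin k → (Fin n → ℤ))
    (hPsat : ∀ m ∈ P, ∀ j, 0 ≤ pairZ m (nρ j))
    (i₀ : Fin k) (e : Fin n → ℤ)
    (he₁ : pairZ e (nρ i₀) = -1)
    (he₂ : ∀ j, j ≠ i₀ → 0 ≤ pairZ e (nρ j))
    (hPe : ∀ m ∈ P, (∀ j, 0 ≤ pairZ (m + e) (nρ j)) → m + e ∈ P)
    (δ : Derivation K (AddMonoidAlgebra K P) (AddMonoidAlgebra K P))
    (hδ₁ : ∀ (m : P) (h : (m : Fin n → ℤ) + e ∈ P),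
      δ (AddMonoidAlgebra.single m 1) =
        pairZ (m : Fin n → ℤ) (nρ i₀) • (AddMonoidAlgebra.single (⟨(m : Fin n → ℤ) + e, h⟩ : P) 1 :
          AddMonoidAlgebra K P))
    (hδ₂ : ∀ m : P, (m : Fin n → ℤ) + e ∉ P → δ (AddMonoidAlgebra.single m 1) = 0) :
    ∀ x : AddMonoidAlgebra K P,
      δ x = 0 ↔ ∀ m ∈ x.coeff.support, pairZ (m : Fin n → ℤ) (nρ i₀) = 0 :=
  stmt9_general P nρ hPsat i₀ e he₁ he₂ hPe δ hδ₁ hδ₂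
end

section
/- Let P be the submonoid of ℤ² consisting of all (a,b) with a ≥ 0, b ≥ 0 except the single point (1,0). For ρ the ray through (0,1) in the dual lattice, the Demazure roots are e_k = (k, −1) with k ∈ ℤ≥0, and the derivation δ_{e_k} (defined by δ_{e_k}(χ^{(a,b)}) = b·χ^{(a+k, b−1)}) preserves the monoid algebra K[P] if and only if k ≥ 2. -/
/-- The monoid of Example 4.2: the first quadrant of `ℤ²` with the point `(1,0)` removed. -/
def P11 : Set (ℤ × ℤ) := {p | 0 ≤ p.1 ∧ 0 ≤ p.2 ∧ p ≠ (1, 0)}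

/-- Example 4.2: for the ray `ρ` through `(0,1)` (the rays of `σ` being `(1,0)` and `(0,1)`),
the Demazure roots are exactly `e_k = (k, -1)`, `k ∈ ℤ≥0`, and the derivation
`δ_{e_k}(χ^{(a,b)}) = b χ^{(a+k, b-1)}` preserves `K[P]` if and only if `k ≥ 2`. -/
theorem stmt11 :
    (∀ e : ℤ × ℤ,
      (e.1 * 0 + e.2 * 1 = -1 ∧ 0 ≤ e.1 * 1 + e.2 * 0) ↔ ∃ k : ℕ, e = ((k : ℤ), -1)) ∧
    (∀ k : ℕ,
      (∀ p ∈ P11, 1 ≤ p.2 → (p.1 + (k : ℤ), p.2 - 1) ∈ P11) ↔ 2 ≤ k) := by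
  constructor
  · intro e
    constructor
    · rintro ⟨h1, h2⟩
      simp at h1 h2
      exact ⟨e.1.toNat, Prod.ext (by simp [Int.toNat_of_nonneg h2]) h1⟩
    · rintro ⟨k, rfl⟩
      simp
  · intro k
    constructor
    · intro h
      by_contra hk
      push_neg at hk
      interval_cases k
      · have := h (1, 1) (by norm_num [P11, Prod.ext_iff]) (by norm_num)
        simp [P11] at this
      · have := h (0, 1) (by norm_num [P11, Prod.ext_iff]) (by norm_num)
        simp [P11] at this
    · rintro hk p ⟨hp1, hp2, -⟩ hb
      refine ⟨by omega, by omega, fun hc => ?_⟩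
      have := congrArg Prod.fst hc
      simp at this
      omega
end

section
/- Let P ⊆ M = ℤⁿ be the weight monoid of a toric variety, σ∨ = ℚ≥0·P its cone, σ the dual cone with extremal rays ρ_1, …, ρ_k and primitive generators n_1, …, n_k. For d ∈ ℕ set L_i(d) = {m ∈ M ∩ σ∨ : ⟨m, n_i⟩ ≤ d}. If the faces ρ̂_1, …, ρ̂_s (s ≤ k) are all almost saturated, then there exists c ∈ ℕ such that every hole u of P (i.e., u ∈ (M ∩ σ∨) \ P) satisfies either u ∈ L_t(c) for some t > s, or u ∈ L_i(c) ∩ L_j(c) for some distinct i, j ≤ s. -/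
lemma pairZ_sub {n : ℕ} (x y z : Fin n → ℤ) :
    pairZ (x - y) z = pairZ x z - pairZ y z := by
  simp [pairZ, sub_mul, Finset.sum_sub_distrib]

lemma exists_bound {k : ℕ} (f : Fin k → Fin k → ℤ) (g : Fin k → ℤ) :
    ∃ c : ℕ, (∀ i j, f i j ≤ (c : ℤ)) ∧ ∀ j, g j ≤ (c : ℤ) := by
  refine ⟨(((Finset.univ : Finset (Fin k)) ×ˢ (Finset.univ : Finset (Fin k))).sup
      fun p => (f p.1 p.2).toNat) +
      ((Finset.univ : Finset (Fin k)).sup fun j => (g j).toNat), ?_, ?_⟩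
  · intro i j
    have h1 : (f i j).toNat ≤ (((Finset.univ : Finset (Fin k)) ×ˢ
        (Finset.univ : Finset (Fin k))).sup fun p => (f p.1 p.2).toNat) :=
      Finset.le_sup (f := fun p => (f p.1 p.2).toNat) (b := (i, j))
        (Finset.mem_product.mpr ⟨Finset.mem_univ i, Finset.mem_univ j⟩)
    have h2 := Int.self_le_toNat (f i j)
    omega
  · intro j
    have h1 : (g j).toNat ≤ ((Finset.univ : Finset (Fin k)).sup fun j => (g j).toNat) :=
      Finset.le_sup (f := fun j => (g j).toNat) (Finset.mem_univ j)
    have h2 := Int.self_le_toNat (g j)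
    omega

/-- Lemma 5.6, (1) ⇒ (2): if the codimension-one faces `ρ̂_1, …, ρ̂_s` of `σ∨` are almost
saturated (and `σ∨` contains a saturation point, Lemma 3.2), then there is `c ∈ ℕ` such
that each hole `u ∈ (M ∩ σ∨) \ P` lies in `L_t(c) = {m ∈ M ∩ σ∨ : ⟨m, n_t⟩ ≤ c}` for some
`t > s`, or in `L_i(c) ∩ L_j(c)` for distinct `i, j ≤ s`.  Here the `nρ j` are the
primitive generators of the extremal rays of the dual cone `σ`, so that
`M ∩ σ∨ = {m | ∀ j, ⟨m, nρ j⟩ ≥ 0}`. -/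
theorem stmt14 {n k : ℕ} (P : AddSubmonoid (Fin n → ℤ))
    (nρ : Fin k → (Fin n → ℤ)) (s : ℕ) (hs : s ≤ k)
    (hPsat : ∀ m ∈ P, ∀ j, 0 ≤ pairZ m (nρ j))
    (hglobal : ∃ v ∈ P, ∀ u : Fin n → ℤ, (∀ j, 0 ≤ pairZ (u - v) (nρ j)) → u ∈ P)
    (hfaces : ∀ i : Fin k, (i : ℕ) < s →
      ∃ w ∈ P, pairZ w (nρ i) = 0 ∧
        ∀ u : Fin n → ℤ, (∀ j, 0 ≤ pairZ (u - w) (nρ j)) → u ∈ P) :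
    ∃ c : ℕ, ∀ u : Fin n → ℤ, (∀ j, 0 ≤ pairZ u (nρ j)) → u ∉ P →
      (∃ t : Fin k, s ≤ (t : ℕ) ∧ pairZ u (nρ t) ≤ (c : ℤ)) ∨
      (∃ i j : Fin k, (i : ℕ) < s ∧ (j : ℕ) < s ∧ i ≠ j ∧
        pairZ u (nρ i) ≤ (c : ℤ) ∧ pairZ u (nρ j) ≤ (c : ℤ)) := by
  classical
  obtain ⟨v, hvP, hv⟩ := hglobal
  choose W hW using fun i : Fin k => fun h : (i : ℕ) < s => hfaces i h
  obtain ⟨c, hcw, hcv⟩ := exists_bound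
    (fun i j => pairZ (if h : (i : ℕ) < s then W i h else 0) (nρ j))
    (fun j => pairZ v (nρ j))
  refine ⟨c, fun u hu huP => ?_⟩
  by_contra hcon
  push_neg at hcon
  obtain ⟨h1, h2⟩ := hcon
  by_cases hex : ∃ i : Fin k, (i : ℕ) < s ∧ pairZ u (nρ i) ≤ (c : ℤ)
  · obtain ⟨i₀, hi₀s, hi₀⟩ := hex
    obtain ⟨hwP, hw0, hwsat⟩ := hW i₀ hi₀s
    refine huP (hwsat u (fun j => ?_))
    have hbd : pairZ (W i₀ hi₀s) (nρ j) ≤ (c : ℤ) := by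
      have := hcw i₀ j
      rwa [dif_pos hi₀s] at this
    rw [pairZ_sub]
    by_cases hji : j = i₀
    · subst hji; rw [hw0]; simpa using hu j
    · by_cases hjs : (j : ℕ) < s
      · have hh := h2 j i₀ hjs hi₀s (fun h => hji h)
        have hgt : (c : ℤ) < pairZ u (nρ j) := by
          by_contra hle; push_neg at hle; have := hh hle; omega
        omega
      · have hgt := h1 j (le_of_not_gt hjs)
        omega
  · push_neg at hex
    refine huP (hv u (fun j => ?_))
    rw [pairZ_sub]
    have hgt : (c : ℤ) < pairZ u (nρ j) := by
      by_cases hjs : (j : ℕ) < s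
      · by_contra hle; push_neg at hle; exact absurd hle (by simpa using hex j hjs)
      · exact h1 j (le_of_not_gt hjs)
    have := hcv j
    omega
end

section
/- Let P = {(a,b) ∈ ℤ² : a ≥ 0, b ≥ 0, (a,b) ∉ {(0, 2k+1)} ∪ {(2k+1, 0)} for k ≥ 0} (all lattice points of the first quadrant except odd points on either axis). Then P is a submonoid of ℤ², both codimension-one faces of the cone ℚ≥0² are nowhere saturated for P, and the linear map swapping the two coordinates of ℤ² maps P onto itself; moreover the only elements of GL₂(ℤ) preserving P are the identity and this swap. -/
/-- The monoid of Example 6.3: the first quadrant of `ℤ²` (viewed as `Fin 2 → ℤ`) with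
the odd points of both coordinate axes removed. -/
def P19 : Set (Fin 2 → ℤ) :=
  {p | 0 ≤ p 0 ∧ 0 ≤ p 1 ∧ ¬(p 1 = 0 ∧ Odd (p 0)) ∧ ¬(p 0 = 0 ∧ Odd (p 1))}

/-- The coordinate swap on `ℤ²`. -/
def swapM : Matrix (Fin 2) (Fin 2) ℤ := !![0, 1; 1, 0]

lemma mulVec_apply19 (M : Matrix (Fin 2) (Fin 2) ℤ) (v : Fin 2 → ℤ) (i : Fin 2) :
    M.mulVec v i = M i 0 * v 0 + M i 1 * v 1 := by
  simp [Matrix.mulVec, dotProduct, Fin.sum_univ_two]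

/-- Example 6.3 (verification): `P19` is a submonoid of `ℤ²`; both codimension-one faces
of `σ∨ = ℚ≥0²` are nowhere saturated for `P19`; the coordinate swap maps `P19` onto
itself; and the only elements of `GL₂(ℤ)` preserving `P19` are the identity and the
swap (so the symmetry group `S(X)` is `ℤ/2`). -/
theorem stmt19 :
    ((0 : Fin 2 → ℤ) ∈ P19 ∧ ∀ x ∈ P19, ∀ y ∈ P19, x + y ∈ P19) ∧
    (¬ ∃ w ∈ P19, w 1 = 0 ∧ ∀ u : Fin 2 → ℤ, w 0 ≤ u 0 → 0 ≤ u 1 → u ∈ P19) ∧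
    (¬ ∃ w ∈ P19, w 0 = 0 ∧ ∀ u : Fin 2 → ℤ, 0 ≤ u 0 → w 1 ≤ u 1 → u ∈ P19) ∧
    (swapM.mulVec '' P19 = P19) ∧
    (∀ M : Matrix (Fin 2) (Fin 2) ℤ, IsUnit M.det →
      M.mulVec '' P19 = P19 → M = 1 ∨ M = swapM) := by
  refine ⟨⟨?_, ?_⟩, ?_, ?_, ?_, ?_⟩
  · simp [P19, Int.odd_iff]
  · intro x hx y hy
    simp only [P19, Set.mem_setOf_eq, Pi.add_apply, Int.odd_iff] at hx hy ⊢
    omega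
  · rintro ⟨w, hw, hw1, hall⟩
    have h := hall ![w 0 + 1, 0] (by simp) (by simp)
    simp only [P19, Set.mem_setOf_eq, Matrix.cons_val_zero, Matrix.cons_val_one,
      Matrix.head_cons, Int.odd_iff, true_and, and_true] at h hw
    omega
  · rintro ⟨w, hw, hw0, hall⟩
    have h := hall ![0, w 1 + 1] (by simp) (by simp)
    simp only [P19, Set.mem_setOf_eq, Matrix.cons_val_zero, Matrix.cons_val_one,
      Matrix.head_cons, Int.odd_iff, true_and, and_true] at h hw
    omega
  · ext p
    constructor
    · rintro ⟨q, hq, rfl⟩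
      simp only [P19, Set.mem_setOf_eq, mulVec_apply19, swapM, Matrix.cons_val_zero,
        Matrix.cons_val_one, Matrix.head_cons, Matrix.cons_val', Matrix.head_fin_const,
        Matrix.of_apply, Int.odd_iff] at hq ⊢
      omega
    · intro hp
      refine ⟨![p 1, p 0], ?_, ?_⟩
      · simp only [P19, Set.mem_setOf_eq, Matrix.cons_val_zero, Matrix.cons_val_one,
          Matrix.head_cons, Int.odd_iff] at hp ⊢
        omega
      · funext i
        fin_cases i <;>
          simp [mulVec_apply19, swapM]
  · intro M hdet hM
    have hfwd : ∀ q ∈ P19, M.mulVec q ∈ P19 := by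
      intro q hq; rw [← hM]; exact Set.mem_image_of_mem _ hq
    have hbwd : ∀ p ∈ P19, ∃ q ∈ P19, M.mulVec q = p := by
      intro p hp; rw [← hM] at hp
      obtain ⟨q, hq, hqe⟩ := hp; exact ⟨q, hq, hqe⟩
    have h20 : (![2, 0] : Fin 2 → ℤ) ∈ P19 := by
      simp [P19, Int.odd_iff]
    have h02 : (![0, 2] : Fin 2 → ℤ) ∈ P19 := by
      simp [P19, Int.odd_iff]
    -- nonnegativity of entries
    have ha : 0 ≤ M 0 0 := by
      have := (hfwd _ h20).1
      rw [mulVec_apply19] at this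
      simp at this; linarith
    have hc : 0 ≤ M 1 0 := by
      have := (hfwd _ h20).2.1
      rw [mulVec_apply19] at this
      simp at this; linarith
    have hb : 0 ≤ M 0 1 := by
      have := (hfwd _ h02).1
      rw [mulVec_apply19] at this
      simp at this; linarith
    have hd : 0 ≤ M 1 1 := by
      have := (hfwd _ h02).2.1
      rw [mulVec_apply19] at this
      simp at this; linarith
    -- preimages of (2,0) and (0,2)
    obtain ⟨q, hq, hqe⟩ := hbwd _ h20
    obtain ⟨r, hr, hre⟩ := hbwd _ h02
    have hq0 : 0 ≤ q 0 := hq.1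
    have hq1 : 0 ≤ q 1 := hq.2.1
    have hr0 : 0 ≤ r 0 := hr.1
    have hr1 : 0 ≤ r 1 := hr.2.1
    have E1 : M 0 0 * q 0 + M 0 1 * q 1 = 2 := by
      have := congrFun hqe 0; rwa [mulVec_apply19] at this
    have E2 : M 1 0 * q 0 + M 1 1 * q 1 = 0 := by
      have := congrFun hqe 1; rwa [mulVec_apply19] at this
    have E3 : M 0 0 * r 0 + M 0 1 * r 1 = 0 := by
      have := congrFun hre 0; rwa [mulVec_apply19] at this
    have E4 : M 1 0 * r 0 + M 1 1 * r 1 = 2 := by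
      have := congrFun hre 1; rwa [mulVec_apply19] at this
    have hcq : M 1 0 * q 0 = 0 := by nlinarith [mul_nonneg hc hq0, mul_nonneg hd hq1]
    have hdq : M 1 1 * q 1 = 0 := by nlinarith [mul_nonneg hc hq0, mul_nonneg hd hq1]
    have har : M 0 0 * r 0 = 0 := by nlinarith [mul_nonneg ha hr0, mul_nonneg hb hr1]
    have hbr : M 0 1 * r 1 = 0 := by nlinarith [mul_nonneg ha hr0, mul_nonneg hb hr1]
    rw [Matrix.det_fin_two] at hdet
    rw [Int.isUnit_iff] at hdet
    rcases hdet with hdet | hdet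
    · -- det = 1 : M = 1
      left
      have hb0 : M 0 1 = 0 := by
        by_contra hbne
        have hr1z : r 1 = 0 := by
          rcases mul_eq_zero.mp hbr with h | h
          · exact absurd h hbne
          · exact h
        have hcr : M 1 0 * r 0 = 2 := by rw [hr1z] at E4; linarith
        have ha0 : M 0 0 = 0 := by
          rcases mul_eq_zero.mp har with h | h
          · exact h
          · rw [h] at hcr; simp at hcr
        rw [ha0] at hdet
        nlinarith
      have had : M 0 0 * M 1 1 = 1 := by rw [hb0] at hdet; linarith
      have ha1 : M 0 0 = 1 ∧ M 1 1 = 1 := by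
        rcases Int.mul_eq_one_iff_eq_one_or_neg_one.mp had with ⟨h1, h2⟩ | ⟨h1, h2⟩
        · exact ⟨h1, h2⟩
        · rw [h1] at ha; omega
      obtain ⟨ha1, hd1⟩ := ha1
      have hq1z : q 1 = 0 := by rw [hd1] at hdq; linarith
      have hq02 : q 0 = 2 := by rw [ha1, hq1z] at E1; linarith
      have hc0 : M 1 0 = 0 := by rw [hq02] at hcq; omega
      rw [Matrix.eta_fin_two M, ha1, hb0, hc0, hd1]
      rw [Matrix.one_fin_two]
    · -- det = -1 : M = swap
      right
      have ha0 : M 0 0 = 0 := by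
        by_contra hane
        have hr0z : r 0 = 0 := by
          rcases mul_eq_zero.mp har with h | h
          · exact absurd h hane
          · exact h
        have hdr : M 1 1 * r 1 = 2 := by rw [hr0z] at E4; linarith
        have hb0 : M 0 1 = 0 := by
          rcases mul_eq_zero.mp hbr with h | h
          · exact h
          · rw [h] at hdr; simp at hdr
        rw [hb0] at hdet
        nlinarith
      have hbc : M 0 1 * M 1 0 = 1 := by rw [ha0] at hdet; linarith
      have hb1c1 : M 0 1 = 1 ∧ M 1 0 = 1 := by
        rcases Int.mul_eq_one_iff_eq_one_or_neg_one.mp hbc with ⟨h1, h2⟩ | ⟨h1, h2⟩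
        · exact ⟨h1, h2⟩
        · rw [h1] at hb; omega
      obtain ⟨hb1, hc1⟩ := hb1c1
      have hq0z : q 0 = 0 := by rw [hc1] at hcq; linarith
      have hq12 : q 1 = 2 := by rw [ha0, hb1, hq0z] at E1; linarith
      have hd0 : M 1 1 = 0 := by rw [hq12] at hdq; omega
      rw [Matrix.eta_fin_two M, ha0, hb1, hc1, hd0]
      rfl
end
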